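/- Let F_q be a finite field with more than 2 elements, q = |F_q|, and let n ≤ q be a positive integer. Fix n distinct elements x_1, ..., x_n ∈ F_q and, for 1 ≤ k ≤ n, let RS_k = {(f(x_1), ..., f(x_n)) : f ∈ F_q[X], deg f < k} denote the Reed–Solomon code of dimension k. Let 1 ≤ k_z ≤ k_b ≤ k_a ≤ n and let α ∈ F_q with α ≠ 0 and α ≠ 1. Then the code C = {(a | a+b | a+αb+z) : a ∈ RS_{k_a}, b ∈ RS_{k_b}, z ∈ RS_{k_z}} ⊆ F_q^{3n} is a linear code of length 3n, dimension k_a + k_b + k_z, and minimum distance exactly min{3(n−k_a+1), 2(n−k_b+1), n−k_z+1}. -/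

import Mathlib

/-!
Writing `c = (a | a + b | a + α b + z)`, the map `(a, b, z) ↦ c` is injective, so the dimension
is `k_a + k_b + k_z`, and Reed–Solomon codes meet the Singleton bound `wt ≥ n - k + 1`, with
equality for the evaluation vector of a product of `k - 1` linear factors.
For the distance: if `z ≠ 0`, then `z = c₃ - α c₂ + (α - 1) c₁` has weight at most `wt c`;
if `z = 0 ≠ b`, then wherever `b i ≠ 0` the three values `a i + r b i` for `r = 0, 1, α` are
distinct, so at most one vanishes and `wt c ≥ 2 wt b`; if `z = b = 0`, then `wt c = 3 wt a`.
-/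

/-- Concatenation `(u | v | w)` of three vectors of length `n` into a vector of length `3n`. -/
def cat3 {F : Type*} {n : ℕ} (u v w : Fin n → F) : Fin (n + n + n) → F :=
  Fin.append (Fin.append u v) w

/-- `d` is the minimum distance of the (nonzero) linear code `C`: it is the least element of
the set of Hamming weights of nonzero codewords of `C`. -/
def IsMinDist {F : Type*} [Field F] [DecidableEq F] {m : ℕ}
    (C : Submodule F (Fin m → F)) (d : ℕ) : Prop :=
  IsLeast {w : ℕ | ∃ c ∈ C, c ≠ 0 ∧ hammingNorm c = w} d

/-- The Reed–Solomon code of length `n` and dimension `k` over `F`, with (distinct)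
evaluation points `x 0, …, x (n-1)`: all evaluation vectors of polynomials of degree `< k`. -/
def RSCode {F : Type*} [Field F] {n : ℕ} (x : Fin n → F) (k : ℕ) : Set (Fin n → F) :=
  {c | ∃ f : Polynomial F, f.degree < (k : WithBot ℕ) ∧ ∀ i, c i = f.eval (x i)}

open Polynomial Finset

section Hamming

variable {ι M : Type*} [Fintype ι] [DecidableEq M]

theorem hammingNorm_add_le [AddZeroClass M] (u v : ι → M) :
    hammingNorm (u + v) ≤ hammingNorm u + hammingNorm v := by
  classical
  refine (card_le_card fun i hi => ?_).trans (card_union_le _ _)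
  simp only [mem_filter, mem_union, mem_univ, true_and, Pi.add_apply] at hi ⊢
  by_contra! h
  simp [h.1, h.2] at hi

theorem hammingNorm_append [Zero M] {m m' : ℕ} (u : Fin m → M) (v : Fin m' → M) :
    hammingNorm (Fin.append u v) = hammingNorm u + hammingNorm v := by
  simp only [hammingNorm, card_filter, Fin.sum_univ_add, Fin.append_left, Fin.append_right]

/-- On the support of `b`, the values `a i + r * b i` are pairwise distinct for `r = s, t, u`,
so at most one of them vanishes. -/
theorem two_mul_hammingNorm_le {F : Type*} [Field F] [DecidableEq F] (a b : ι → F) {s t u : F}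
    (hst : s ≠ t) (hsu : s ≠ u) (htu : t ≠ u) :
    2 * hammingNorm b ≤
      hammingNorm (a + s • b) + hammingNorm (a + t • b) + hammingNorm (a + u • b) := by
  simp only [hammingNorm, card_filter, mul_sum, ← sum_add_distrib]
  refine sum_le_sum fun i _ => ?_
  simp only [Pi.add_apply, Pi.smul_apply, smul_eq_mul]
  by_cases hb : b i = 0
  · simp [hb]
  have eq_of_zero {r r' : F} (h : a i + r * b i = 0) (h' : a i + r' * b i = 0) : r = r' :=
    mul_right_cancel₀ hb (by linear_combination h - h')
  rw [if_pos hb]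
  by_cases hs : a i + s * b i = 0 <;> by_cases ht : a i + t * b i = 0 <;>
    by_cases hu : a i + u * b i = 0 <;>
    simp only [hs, ht, hu, ne_eq, not_true_eq_false, not_false_eq_true, if_true, if_false] <;>
    first
    | omega
    | exact absurd (eq_of_zero hs ht) hst
    | exact absurd (eq_of_zero hs hu) hsu
    | exact absurd (eq_of_zero ht hu) htu

end Hamming

section ReedSolomon

variable {ι F : Type*} [Field F]

noncomputable def evalMap (x : ι → F) : F[X] →ₗ[F] ι → F :=
  LinearMap.pi fun i => leval (x i)

@[simp]
theorem evalMap_apply (x : ι → F) (f : F[X]) (i : ι) : evalMap x f i = f.eval (x i) := rfl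

noncomputable def rsCode (x : ι → F) (k : ℕ) : Submodule F (ι → F) :=
  (degreeLT F k).map (evalMap x)

theorem coe_rsCode {n : ℕ} (x : Fin n → F) (k : ℕ) :
    (rsCode x k : Set (Fin n → F)) = RSCode x k := by
  ext c
  simp [rsCode, RSCode, mem_degreeLT, funext_iff, eq_comm]

variable [Fintype ι] {x : ι → F} {k : ℕ}

theorem finrank_rsCode (hx : Function.Injective x) (hk : k ≤ Fintype.card ι) :
    Module.finrank F (rsCode x k) = k := by
  have hinj : Function.Injective ((evalMap x).domRestrict (degreeLT F k)) := by
    refine (injective_iff_map_eq_zero _).2 fun ⟨f, hf⟩ h => Subtype.ext ?_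
    refine eq_zero_of_degree_lt_of_eval_index_eq_zero univ hx.injOn ?_ fun i _ => congr_fun h i
    exact (mem_degreeLT.1 hf).trans_le (by simpa using hk)
  rw [rsCode, ← LinearMap.range_domRestrict, LinearMap.finrank_range_of_inj hinj,
    (degreeLTEquiv F k).finrank_eq, Module.finrank_fin_fun]

variable [DecidableEq F]

theorem card_sub_add_one_le_hammingNorm (hx : Function.Injective x) {c : ι → F}
    (hc : c ∈ rsCode x k) (hc0 : c ≠ 0) : Fintype.card ι - k + 1 ≤ hammingNorm c := by
  obtain ⟨f, hf, rfl⟩ := hc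
  set Z := univ.filter fun i => f.eval (x i) = 0
  have hZ : #Z < k := by
    by_contra! hkZ
    refine hc0 ?_
    rw [eq_zero_of_degree_lt_of_eval_index_eq_zero Z hx.injOn
      ((mem_degreeLT.1 hf).trans_le (by exact_mod_cast hkZ)) (by simp [Z]), map_zero]
  have hsplit : #Z + hammingNorm (evalMap x f) = Fintype.card ι := by
    simpa [hammingNorm, Z] using card_filter_add_card_filter_not (s := univ) _
  have := hammingNorm_pos_iff.2 hc0
  omega

theorem exists_mem_rsCode_hammingNorm_eq (hx : Function.Injective x) (hk0 : 0 < k)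
    (hk : k ≤ Fintype.card ι) : ∃ c ∈ rsCode x k, hammingNorm c = Fintype.card ι - k + 1 := by
  classical
  obtain ⟨s, -, hs⟩ := exists_subset_card_eq (s := (univ : Finset ι)) (n := k - 1)
    (by simp; omega)
  refine ⟨evalMap x (Lagrange.nodal s x), Submodule.mem_map_of_mem (mem_degreeLT.2 ?_), ?_⟩
  · rw [Lagrange.degree_nodal, hs]
    exact_mod_cast Nat.sub_lt hk0 one_pos
  · have hsupp : hammingNorm (evalMap x (Lagrange.nodal s x)) = #sᶜ := by
      unfold hammingNorm
      congr 1
      refine Finset.ext fun i => ?_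
      rw [mem_filter]
      by_cases hi : i ∈ s
      · simpa [hi] using Lagrange.eval_nodal_at_node hi
      · simpa [hi] using Lagrange.eval_nodal_not_at_node (v := x)
          fun j hj => hx.ne (ne_of_mem_of_not_mem hj hi).symm
    rw [hsupp, card_compl, hs]
    omega

end ReedSolomon

section Concatenation

variable {M : Type*} {n : ℕ}

theorem Fin.append_add [Add M] {m m' : ℕ} (u u' : Fin m → M) (v v' : Fin m' → M) :
    Fin.append (u + u') (v + v') = Fin.append u v + Fin.append u' v' := by
  funext i
  induction i using Fin.addCases <;> simp

theorem Fin.append_smul {R : Type*} [SMul R M] {m m' : ℕ} (c : R) (u : Fin m → M)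
    (v : Fin m' → M) : Fin.append (c • u) (c • v) = c • Fin.append u v := by
  funext i
  induction i using Fin.addCases <;> simp

theorem cat3_add [Add M] (u v w u' v' w' : Fin n → M) :
    cat3 (u + u') (v + v') (w + w') = cat3 u v w + cat3 u' v' w' := by
  simp only [cat3, Fin.append_add]

theorem cat3_smul {R : Type*} [SMul R M] (c : R) (u v w : Fin n → M) :
    cat3 (c • u) (c • v) (c • w) = c • cat3 u v w := by
  simp only [cat3, Fin.append_smul]

theorem hammingNorm_cat3 [Zero M] [DecidableEq M] (u v w : Fin n → M) :
    hammingNorm (cat3 u v w) = hammingNorm u + hammingNorm v + hammingNorm w := by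
  simp only [cat3, hammingNorm_append]

theorem cat3_eq_zero_iff [Zero M] {u v w : Fin n → M} :
    cat3 u v w = 0 ↔ u = 0 ∧ v = 0 ∧ w = 0 := by
  classical
  simp only [← hammingNorm_eq_zero, hammingNorm_cat3]
  omega

end Concatenation

section StackedCode

variable {F : Type*} [Field F] {n : ℕ}

noncomputable def stackMap (α : F) (n : ℕ) :
    (Fin n → F) × (Fin n → F) × (Fin n → F) →ₗ[F] Fin (n + n + n) → F where
  toFun p := cat3 p.1 (p.1 + p.2.1) (p.1 + α • p.2.1 + p.2.2)
  map_add' p q := by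
    rw [← cat3_add]
    congr 1 <;> simp only [Prod.fst_add, Prod.snd_add] <;> module
  map_smul' c p := by
    rw [← cat3_smul]
    congr 1 <;> simp only [Prod.smul_fst, Prod.smul_snd, RingHom.id_apply] <;> module

theorem stackMap_injective (α : F) : Function.Injective (stackMap α n) := by
  refine (injective_iff_map_eq_zero _).2 fun ⟨a, b, z⟩ h => ?_
  obtain ⟨rfl, hb, hz⟩ := cat3_eq_zero_iff.1 h
  simp only [zero_add] at hb
  simp_all

noncomputable def stackedRSCode (x : Fin n → F) (α : F) (ka kb kz : ℕ) :
    Submodule F (Fin (n + n + n) → F) :=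
  LinearMap.range (stackMap α n ∘ₗ
    (rsCode x ka).subtype.prodMap ((rsCode x kb).subtype.prodMap (rsCode x kz).subtype))

variable {x : Fin n → F} {α : F} {ka kb kz : ℕ}

theorem mem_stackedRSCode {c : Fin (n + n + n) → F} :
    c ∈ stackedRSCode x α ka kb kz ↔ ∃ a ∈ rsCode x ka, ∃ b ∈ rsCode x kb, ∃ z ∈ rsCode x kz,
      c = cat3 a (a + b) (a + α • b + z) := by
  constructor
  · rintro ⟨⟨⟨a, ha⟩, ⟨b, hb⟩, ⟨z, hz⟩⟩, rfl⟩
    exact ⟨a, ha, b, hb, z, hz, rfl⟩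
  · rintro ⟨a, ha, b, hb, z, hz, rfl⟩
    exact ⟨⟨⟨a, ha⟩, ⟨b, hb⟩, ⟨z, hz⟩⟩, rfl⟩

theorem finrank_stackedRSCode (hx : Function.Injective x) (ha : ka ≤ n) (hb : kb ≤ n)
    (hz : kz ≤ n) : Module.finrank F (stackedRSCode x α ka kb kz) = ka + kb + kz := by
  have hinj : Function.Injective (stackMap α n ∘ₗ (rsCode x ka).subtype.prodMap
      ((rsCode x kb).subtype.prodMap (rsCode x kz).subtype)) :=
    (stackMap_injective α).comp <| Prod.map_injective.2 ⟨Subtype.val_injective,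
      Prod.map_injective.2 ⟨Subtype.val_injective, Subtype.val_injective⟩⟩
  rw [stackedRSCode, LinearMap.finrank_range_of_inj hinj,
    Module.finrank_prod, Module.finrank_prod]
  simp only [finrank_rsCode hx, Fintype.card_fin, ha, hb, hz]
  ring

end StackedCode

section MinDist

variable {F : Type*} [Field F] [DecidableEq F] {n : ℕ}

theorem hammingNorm_le_hammingNorm_cat3 (α : F) (a b z : Fin n → F) :
    hammingNorm z ≤ hammingNorm (cat3 a (a + b) (a + α • b + z)) := by
  have hz : z = (a + α • b + z) + (-α) • (a + b) + (α - 1) • a := by module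
  calc hammingNorm z
      ≤ hammingNorm (a + α • b + z) + hammingNorm ((-α) • (a + b)) +
          hammingNorm ((α - 1) • a) := by
        conv_lhs => rw [hz]
        exact (hammingNorm_add_le _ _).trans (by gcongr; exact hammingNorm_add_le _ _)
    _ ≤ hammingNorm (a + α • b + z) + hammingNorm (a + b) + hammingNorm a := by
        gcongr <;> exact hammingNorm_smul_le_hammingNorm
    _ = hammingNorm (cat3 a (a + b) (a + α • b + z)) := by
        rw [hammingNorm_cat3]
        ring

variable {x : Fin n → F} {α : F} {ka kb kz : ℕ}

theorem min_le_hammingNorm_of_mem_stackedRSCode (hx : Function.Injective x) (hα0 : α ≠ 0)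
    (hα1 : α ≠ 1) {c : Fin (n + n + n) → F} (hc : c ∈ stackedRSCode x α ka kb kz)
    (hc0 : c ≠ 0) :
    min (3 * (n - ka + 1)) (min (2 * (n - kb + 1)) (n - kz + 1)) ≤ hammingNorm c := by
  obtain ⟨a, ha, b, hb, z, hz, rfl⟩ := mem_stackedRSCode.1 hc
  have rs_bound {k : ℕ} {c : Fin n → F} (hc : c ∈ rsCode x k) (hc0 : c ≠ 0) :
      n - k + 1 ≤ hammingNorm c := by
    simpa using card_sub_add_one_le_hammingNorm hx hc hc0
  by_cases hz0 : z = 0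
  · subst hz0
    by_cases hb0 : b = 0
    · subst hb0
      have ha0 : a ≠ 0 := by
        rintro rfl
        simp [cat3_eq_zero_iff] at hc0
      have := rs_bound ha ha0
      simp only [add_zero, smul_zero, hammingNorm_cat3]
      omega
    · have := rs_bound hb hb0
      have := two_mul_hammingNorm_le a b zero_ne_one hα0.symm hα1.symm
      simp only [zero_smul, add_zero, one_smul] at this
      rw [hammingNorm_cat3, add_zero]
      omega
  · have := rs_bound hz hz0
    have := hammingNorm_le_hammingNorm_cat3 α a b z
    omega

theorem min_mem_hammingNorms_stackedRSCode (hx : Function.Injective x) (hα0 : α ≠ 0)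
    (hkz : 1 ≤ kz) (hzb : kz ≤ kb) (hba : kb ≤ ka) (hka : ka ≤ n) :
    min (3 * (n - ka + 1)) (min (2 * (n - kb + 1)) (n - kz + 1)) ∈
      {w | ∃ c ∈ stackedRSCode x α ka kb kz, c ≠ 0 ∧ hammingNorm c = w} := by
  have mem {a b z : Fin n → F} (ha : a ∈ rsCode x ka) (hb : b ∈ rsCode x kb)
      (hz : z ∈ rsCode x kz) {w : ℕ} (hw : hammingNorm (cat3 a (a + b) (a + α • b + z)) = w)
      (hw0 : 0 < w) :
      w ∈ {w | ∃ c ∈ stackedRSCode x α ka kb kz, c ≠ 0 ∧ hammingNorm c = w} :=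
    ⟨_, mem_stackedRSCode.2 ⟨a, ha, b, hb, z, hz, rfl⟩, hammingNorm_pos_iff.1 (hw ▸ hw0), hw⟩
  have rs_witness {k : ℕ} (hk0 : 0 < k) (hk : k ≤ n) :
      ∃ c ∈ rsCode x k, hammingNorm c = n - k + 1 := by
    simpa using exists_mem_rsCode_hammingNorm_eq hx hk0 (by simpa using hk)
  obtain ⟨a, ha, hwa⟩ := rs_witness (k := ka) (by omega) hka
  obtain ⟨b, hb, hwb⟩ := rs_witness (k := kb) (by omega) (by omega)
  obtain ⟨z, hz, hwz⟩ := rs_witness (k := kz) (by omega) (by omega)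
  have hwαb : hammingNorm (α • b) = hammingNorm b :=
    hammingNorm_smul (fun _ => IsSMulRegular.of_ne_zero hα0) b
  rcases min_choice (3 * (n - ka + 1)) (min (2 * (n - kb + 1)) (n - kz + 1)) with h | h <;>
    rw [h]
  · exact mem ha (rsCode x kb).zero_mem (rsCode x kz).zero_mem
      (by simp only [add_zero, smul_zero, hammingNorm_cat3, hwa]; omega) (by omega)
  rcases min_choice (2 * (n - kb + 1)) (n - kz + 1) with h | h <;> rw [h]
  · exact mem (rsCode x ka).zero_mem hb (rsCode x kz).zero_mem
      (by simp only [zero_add, add_zero, hammingNorm_cat3, hammingNorm_zero, hwαb, hwb]; omega)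
      (by omega)
  · exact mem (rsCode x ka).zero_mem (rsCode x kb).zero_mem hz
      (by simp [hammingNorm_cat3, hwz]) (by omega)

end MinDist

theorem stmt_6_general (F : Type*) [Field F] [DecidableEq F] (n : ℕ)
    (x : Fin n → F) (hx : Function.Injective x)
    (ka kb kz : ℕ) (hkz : 1 ≤ kz) (hzb : kz ≤ kb) (hba : kb ≤ ka) (hka : ka ≤ n)
    (α : F) (hα0 : α ≠ 0) (hα1 : α ≠ 1) :
    ∃ C : Submodule F (Fin (n + n + n) → F),
      (C : Set (Fin (n + n + n) → F)) =
        {c | ∃ a ∈ RSCode x ka, ∃ b ∈ RSCode x kb, ∃ z ∈ RSCode x kz,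
          c = cat3 a (a + b) (a + α • b + z)} ∧
      Module.finrank F C = ka + kb + kz ∧
      IsMinDist C (min (3 * (n - ka + 1)) (min (2 * (n - kb + 1)) (n - kz + 1))) := by
  refine ⟨stackedRSCode x α ka kb kz, ?_, finrank_stackedRSCode hx hka (by omega) (by omega),
    min_mem_hammingNorms_stackedRSCode hx hα0 hkz hzb hba hka, ?_⟩
  · ext c
    simp [mem_stackedRSCode, ← coe_rsCode]
  · rintro w ⟨c, hc, hc0, rfl⟩
    exact min_le_hammingNorm_of_mem_stackedRSCode hx hα0 hα1 hc hc0

/-- Let `|F| > 2`, `0 < n ≤ |F|`, let `x : Fin n → F` be `n` distinct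
evaluation points, let `1 ≤ k_z ≤ k_b ≤ k_a ≤ n` and `α ∈ F` with `α ≠ 0`, `α ≠ 1`. Then
`C = {(a | a+b | a+αb+z) : a ∈ RS_{k_a}, b ∈ RS_{k_b}, z ∈ RS_{k_z}} ⊆ F^{3n}` is a linear
code of length `3n`, dimension `k_a + k_b + k_z`, and minimum distance exactly
`min {3(n−k_a+1), 2(n−k_b+1), n−k_z+1}`. -/
theorem stmt_6 (F : Type*) [Field F] [Fintype F] [DecidableEq F]
    (hF : 2 < Fintype.card F) (n : ℕ) (hn : 0 < n) (hnq : n ≤ Fintype.card F)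
    (x : Fin n → F) (hx : Function.Injective x)
    (ka kb kz : ℕ) (hkz : 1 ≤ kz) (hzb : kz ≤ kb) (hba : kb ≤ ka) (hka : ka ≤ n)
    (α : F) (hα0 : α ≠ 0) (hα1 : α ≠ 1) :
    ∃ C : Submodule F (Fin (n + n + n) → F),
      (C : Set (Fin (n + n + n) → F)) =
        {c | ∃ a ∈ RSCode x ka, ∃ b ∈ RSCode x kb, ∃ z ∈ RSCode x kz,
          c = cat3 a (a + b) (a + α • b + z)} ∧
      Module.finrank F C = ka + kb + kz ∧
      IsMinDist C (min (3 * (n - ka + 1)) (min (2 * (n - kb + 1)) (n - kz + 1))) :=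
  stmt_6_general F n x hx ka kb kz hkz hzb hba hka α hα0 hα1
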